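/- Let γ(s,t) be an arclength-parametrized inextensible flow of pseudo null curves in E⁴₁ with pseudo null Frenet frame {T, N, B₁, B₂}, curvatures k₁ = 1, k₂, k₃, flow ∂γ/∂t = α₁T + α₂N + α₃B₁ + α₄B₂ (so ∂α₁/∂s = α₄), and ψ₁ = ⟨∂N/∂t, B₁⟩, ψ₂ = ⟨∂N/∂t, B₂⟩, ψ₃ = ⟨∂B₁/∂t, B₂⟩. Then ∂ψ₂/∂s = ∂α₄/∂s − α₃k₂ − ψ₁k₃ + ψ₃k₂. -/

import Mathlib

/-!
Formalization of inextensible flows of partially null / pseudo null curves in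
Minkowski space-time `E⁴₁` (ℝ⁴ with signature (-,+,+,+)).
-/

noncomputable section

/-- The Minkowski bilinear form on `ℝ⁴` with signature `(-,+,+,+)`. -/
def mink (v w : Fin 4 → ℝ) : ℝ :=
  -(v 0 * w 0) + v 1 * w 1 + v 2 * w 2 + v 3 * w 3

/-- The Minkowski norm `‖v‖ = √|⟨v,v⟩|`. -/
def mnorm (v : Fin 4 → ℝ) : ℝ := Real.sqrt |mink v v|

/-!
Differentiate `ψ₂ = ⟨∂ₜN, B₂⟩` in `s`. Since mixed partials commute, `∂ₛ∂ₜN = ∂ₜ(k₂B₁)`, whose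
pairing with `B₂` is `k₂ψ₃`, and `∂ₛB₂ = -T - k₃B₁` contributes `-⟨∂ₜN, T⟩ - k₃ψ₁`. As `⟨N, T⟩ ≡ 0`,
`⟨∂ₜN, T⟩ = -⟨N, ∂ₜT⟩`, and `∂ₜT = ∂ₛ∂ₜγ`: differentiating `⟨N, ∂ₜγ⟩ = α₄` in `s`, with
`∂ₛN = k₂B₁` and `⟨B₁, ∂ₜγ⟩ = α₃`, gives `⟨N, ∂ₜT⟩ = ∂ₛα₄ - k₂α₃`.
-/

open Function

section PartialDerivatives

variable {E : Type*} [NormedAddCommGroup E] [NormedSpace ℝ E] {s t : ℝ}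

theorem HasFDerivAt.hasDerivAt_slice_left {g : ℝ × ℝ → E} {g' : ℝ × ℝ →L[ℝ] E}
    (hg : HasFDerivAt g g' (s, t)) : HasDerivAt (fun x => g (x, t)) (g' (1, 0)) s :=
  hg.comp_hasDerivAt s ((hasDerivAt_id s).prodMk (hasDerivAt_const s t))

theorem HasFDerivAt.hasDerivAt_slice_right {g : ℝ × ℝ → E} {g' : ℝ × ℝ →L[ℝ] E}
    (hg : HasFDerivAt g g' (s, t)) : HasDerivAt (fun y => g (s, y)) (g' (0, 1)) t :=
  hg.comp_hasDerivAt t ((hasDerivAt_const t s).prodMk (hasDerivAt_id t))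

theorem DifferentiableAt.hasDerivAt_deriv_left {f : ℝ → ℝ → E}
    (hf : DifferentiableAt ℝ (uncurry f) (s, t)) :
    HasDerivAt (fun x => f x t) (deriv (fun x => f x t) s) s :=
  hf.hasFDerivAt.hasDerivAt_slice_left.differentiableAt.hasDerivAt

theorem DifferentiableAt.hasDerivAt_deriv_right {f : ℝ → ℝ → E}
    (hf : DifferentiableAt ℝ (uncurry f) (s, t)) :
    HasDerivAt (fun y => f s y) (deriv (fun y => f s y) t) t :=
  hf.hasFDerivAt.hasDerivAt_slice_right.differentiableAt.hasDerivAt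

theorem ContDiff.hasDerivAt_deriv_right_comm {f : ℝ → ℝ → E} (hf : ContDiff ℝ 2 (uncurry f))
    (s t : ℝ) :
    HasDerivAt (fun x => deriv (fun y => f x y) t)
      (deriv (fun y => deriv (fun x => f x y) s) t) s := by
  have hF : Differentiable ℝ (uncurry f) := hf.differentiable two_ne_zero
  have hF' : Differentiable ℝ (fderiv ℝ (uncurry f)) :=
    (hf.fderiv_right (m := 1) le_rfl).differentiable one_ne_zero
  have hsymm := (hf.contDiffAt (x := (s, t))).isSymmSndFDerivAt (by simp)
  have partial_right : ∀ x y, deriv (fun y => f x y) y = fderiv ℝ (uncurry f) (x, y) (0, 1) :=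
    fun x y => (hF (x, y)).hasFDerivAt.hasDerivAt_slice_right.deriv
  have partial_left : ∀ x y, deriv (fun x => f x y) x = fderiv ℝ (uncurry f) (x, y) (1, 0) :=
    fun x y => (hF (x, y)).hasFDerivAt.hasDerivAt_slice_left.deriv
  have hleft := ((hF' (s, t)).hasFDerivAt.hasDerivAt_slice_left).clm_apply
    (hasDerivAt_const s ((0, 1) : ℝ × ℝ))
  have hright := ((hF' (s, t)).hasFDerivAt.hasDerivAt_slice_right).clm_apply
    (hasDerivAt_const t ((1, 0) : ℝ × ℝ))
  simp only [map_zero, add_zero] at hleft hright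
  simp only [partial_right, partial_left, hright.deriv]
  exact hsymm.eq (1, 0) (0, 1) ▸ hleft

end PartialDerivatives

theorem isBilinearMap_mink : IsBilinearMap ℝ mink where
  add_left u v w := by simp only [mink, Pi.add_apply]; ring
  smul_left a u w := by simp only [mink, Pi.smul_apply, smul_eq_mul]; ring
  add_right u v w := by simp only [mink, Pi.add_apply]; ring
  smul_right a u w := by simp only [mink, Pi.smul_apply, smul_eq_mul]; ring

theorem mink_comm (u v : Fin 4 → ℝ) : mink u v = mink v u := by
  simp only [mink]; ring

theorem mink_add_left (u v w : Fin 4 → ℝ) : mink (u + v) w = mink u w + mink v w :=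
  isBilinearMap_mink.add_left u v w

theorem mink_add_right (u v w : Fin 4 → ℝ) : mink u (v + w) = mink u v + mink u w :=
  isBilinearMap_mink.add_right u v w

theorem mink_smul_left (a : ℝ) (u w : Fin 4 → ℝ) : mink (a • u) w = a * mink u w :=
  isBilinearMap_mink.smul_left a u w

theorem mink_smul_right (a : ℝ) (u w : Fin 4 → ℝ) : mink u (a • w) = a * mink u w :=
  isBilinearMap_mink.smul_right a u w

theorem mink_sub_right (u v w : Fin 4 → ℝ) : mink u (v - w) = mink u v - mink u w := by
  rw [sub_eq_add_neg, mink_add_right, ← neg_one_smul ℝ w, mink_smul_right]; ring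

theorem HasDerivAt.mink {u v : ℝ → Fin 4 → ℝ} {u' v' : Fin 4 → ℝ} {x : ℝ}
    (hu : HasDerivAt u u' x) (hv : HasDerivAt v v' x) :
    HasDerivAt (fun y => mink (u y) (v y)) (mink u' (v x) + mink (u x) v') x := by
  rw [add_comm]
  exact isBilinearMap_mink.toContinuousBilinearMap.hasDerivAt_of_bilinear (fun _ => hu) (fun _ => hv)

theorem mink_add_mink_eq_zero_of_mink_const {u v : ℝ → Fin 4 → ℝ} {u' v' : Fin 4 → ℝ} {x c : ℝ}
    (hu : HasDerivAt u u' x) (hv : HasDerivAt v v' x) (huv : ∀ y, mink (u y) (v y) = c) :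
    mink u' (v x) + mink (u x) v' = 0 := by
  have h := hu.mink hv
  simp only [huv] at h
  exact h.unique (hasDerivAt_const x c)

section PseudoNullFrame

variable {T N B₁ B₂ : Fin 4 → ℝ}

theorem mink_N_combination (hTN : mink T N = 0) (hNN : mink N N = 0) (hNB₁ : mink N B₁ = 0)
    (hNB₂ : mink N B₂ = 1) (a b c d : ℝ) :
    mink N (a • T + b • N + c • B₁ + d • B₂) = d := by
  simp only [mink_add_right, mink_smul_right, mink_comm N T, hTN, hNN, hNB₁, hNB₂]
  ring

theorem mink_B₁_combination (hTB₁ : mink T B₁ = 0) (hNB₁ : mink N B₁ = 0)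
    (hB₁B₁ : mink B₁ B₁ = 1) (hB₁B₂ : mink B₁ B₂ = 0) (a b c d : ℝ) :
    mink B₁ (a • T + b • N + c • B₁ + d • B₂) = c := by
  simp only [mink_add_right, mink_smul_right, mink_comm B₁ T, mink_comm B₁ N, hTB₁, hNB₁, hB₁B₁,
    hB₁B₂]
  ring

end PseudoNullFrame

theorem mink_eq_deriv_sub_of_hasDerivAt {N V : ℝ → Fin 4 → ℝ} {B₁ V' : Fin 4 → ℝ} {a : ℝ → ℝ}
    {b k s : ℝ} (hN : HasDerivAt N (k • B₁) s) (hV : HasDerivAt V V' s)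
    (hNV : ∀ x, mink (N x) (V x) = a x) (hB₁V : mink B₁ (V s) = b) :
    mink (N s) V' = deriv a s - b * k := by
  have h := hN.mink hV
  simp only [hNV, mink_smul_left, hB₁V] at h
  rw [h.deriv]
  ring

theorem psi2_equation_pseudo_null_general
    (γ T N B₁ B₂ : ℝ → ℝ → (Fin 4 → ℝ))
    (k₁ k₂ k₃ α₁ α₂ α₃ α₄ : ℝ → ℝ → ℝ)
    (ψ₁ ψ₂ ψ₃ : ℝ → ℝ → ℝ)
    (hγsmooth : ContDiff ℝ (⊤ : ℕ∞) (fun p : ℝ × ℝ => γ p.1 p.2))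
    (hTsmooth : ContDiff ℝ (⊤ : ℕ∞) (fun p : ℝ × ℝ => T p.1 p.2))
    (hNsmooth : ContDiff ℝ (⊤ : ℕ∞) (fun p : ℝ × ℝ => N p.1 p.2))
    (hB₁smooth : ContDiff ℝ (⊤ : ℕ∞) (fun p : ℝ × ℝ => B₁ p.1 p.2))
    (hB₂smooth : ContDiff ℝ (⊤ : ℕ∞) (fun p : ℝ × ℝ => B₂ p.1 p.2))
    (hk₂smooth : ContDiff ℝ (⊤ : ℕ∞) (fun p : ℝ × ℝ => k₂ p.1 p.2))
    (hB₁B₁ : ∀ s t : ℝ, mink (B₁ s t) (B₁ s t) = 1)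
    (hNN : ∀ s t : ℝ, mink (N s t) (N s t) = 0)
    (hNB₂ : ∀ s t : ℝ, mink (N s t) (B₂ s t) = 1)
    (hTN : ∀ s t : ℝ, mink (T s t) (N s t) = 0)
    (hTB₁ : ∀ s t : ℝ, mink (T s t) (B₁ s t) = 0)
    (hNB₁ : ∀ s t : ℝ, mink (N s t) (B₁ s t) = 0)
    (hB₁B₂ : ∀ s t : ℝ, mink (B₁ s t) (B₂ s t) = 0)
    -- arclength parametrization and pseudo null Frenet equations (k₁ = 1)
    (hk₁ : ∀ s t : ℝ, k₁ s t = 1)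
    (hT : ∀ s t : ℝ, T s t = deriv (fun x => γ x t) s)
    (hfr₂ : ∀ s t : ℝ, deriv (fun x => N x t) s = k₂ s t • B₁ s t)
    (hfr₄ : ∀ s t : ℝ, deriv (fun x => B₂ x t) s = -(k₁ s t) • T s t - k₃ s t • B₁ s t)
    (hflow : ∀ s t : ℝ, deriv (fun x => γ s x) t =
      α₁ s t • T s t + α₂ s t • N s t + α₃ s t • B₁ s t + α₄ s t • B₂ s t)
    (hψ₁ : ∀ s t : ℝ, ψ₁ s t = mink (deriv (fun x => N s x) t) (B₁ s t))
    (hψ₂ : ∀ s t : ℝ, ψ₂ s t = mink (deriv (fun x => N s x) t) (B₂ s t))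
    (hψ₃ : ∀ s t : ℝ, ψ₃ s t = mink (deriv (fun x => B₁ s x) t) (B₂ s t)) :
    ∀ s t : ℝ, deriv (fun x => ψ₂ x t) s =
      deriv (fun x => α₄ x t) s - α₃ s t * k₂ s t - ψ₁ s t * k₃ s t + ψ₃ s t * k₂ s t := by
  intro s t
  have h2 : (2 : WithTop ℕ∞) ≤ ((⊤ : ℕ∞) : WithTop ℕ∞) := WithTop.coe_le_coe.mpr le_top
  have hNs : HasDerivAt (fun x => N x t) (k₂ s t • B₁ s t) s :=
    hfr₂ s t ▸ (hNsmooth.differentiable (by simp) (s, t)).hasDerivAt_deriv_left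
  have hB₂s : HasDerivAt (fun x => B₂ x t) (-(k₁ s t) • T s t - k₃ s t • B₁ s t) s :=
    hfr₄ s t ▸ (hB₂smooth.differentiable (by simp) (s, t)).hasDerivAt_deriv_left
  have hNTt : mink (N s t) (deriv (fun y => T s y) t) =
      deriv (fun x => α₄ x t) s - α₃ s t * k₂ s t := by
    have hV := (hγsmooth.of_le h2).hasDerivAt_deriv_right_comm s t
    simp only [← hT] at hV
    refine mink_eq_deriv_sub_of_hasDerivAt hNs hV (fun x => ?_) ?_
    · rw [hflow]; exact mink_N_combination (hTN x t) (hNN x t) (hNB₁ x t) (hNB₂ x t) _ _ _ _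
    · rw [hflow]; exact mink_B₁_combination (hTB₁ s t) (hNB₁ s t) (hB₁B₁ s t) (hB₁B₂ s t) _ _ _ _
  have hNtT := mink_add_mink_eq_zero_of_mink_const
    (hNsmooth.differentiable (by simp) (s, t)).hasDerivAt_deriv_right
    (hTsmooth.differentiable (by simp) (s, t)).hasDerivAt_deriv_right
    (fun y => (mink_comm _ _).trans (hTN s y))
  have hNts := (hNsmooth.of_le h2).hasDerivAt_deriv_right_comm s t
  simp only [hfr₂] at hNts
  rw [((hk₂smooth.differentiable (by simp) (s, t)).hasDerivAt_deriv_right.fun_smul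
    (hB₁smooth.differentiable (by simp) (s, t)).hasDerivAt_deriv_right).deriv] at hNts
  simp only [hψ₂]
  rw [(hNts.mink hB₂s).deriv]
  simp only [mink_add_left, mink_smul_left, mink_sub_right, mink_smul_right, hB₁B₂, hk₁, ← hψ₁,
    ← hψ₃]
  linarith

theorem psi2_equation_pseudo_null
    (γ T N B₁ B₂ : ℝ → ℝ → (Fin 4 → ℝ))
    (k₁ k₂ k₃ α₁ α₂ α₃ α₄ : ℝ → ℝ → ℝ)
    (ψ₁ ψ₂ ψ₃ : ℝ → ℝ → ℝ)
    (hγsmooth : ContDiff ℝ (⊤ : ℕ∞) (fun p : ℝ × ℝ => γ p.1 p.2))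
    (hTsmooth : ContDiff ℝ (⊤ : ℕ∞) (fun p : ℝ × ℝ => T p.1 p.2))
    (hNsmooth : ContDiff ℝ (⊤ : ℕ∞) (fun p : ℝ × ℝ => N p.1 p.2))
    (hB₁smooth : ContDiff ℝ (⊤ : ℕ∞) (fun p : ℝ × ℝ => B₁ p.1 p.2))
    (hB₂smooth : ContDiff ℝ (⊤ : ℕ∞) (fun p : ℝ × ℝ => B₂ p.1 p.2))
    (hk₂smooth : ContDiff ℝ (⊤ : ℕ∞) (fun p : ℝ × ℝ => k₂ p.1 p.2))
    (hk₃smooth : ContDiff ℝ (⊤ : ℕ∞) (fun p : ℝ × ℝ => k₃ p.1 p.2))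
    (hα₁smooth : ContDiff ℝ (⊤ : ℕ∞) (fun p : ℝ × ℝ => α₁ p.1 p.2))
    (hα₂smooth : ContDiff ℝ (⊤ : ℕ∞) (fun p : ℝ × ℝ => α₂ p.1 p.2))
    (hα₃smooth : ContDiff ℝ (⊤ : ℕ∞) (fun p : ℝ × ℝ => α₃ p.1 p.2))
    (hα₄smooth : ContDiff ℝ (⊤ : ℕ∞) (fun p : ℝ × ℝ => α₄ p.1 p.2))
    (hTT : ∀ s t : ℝ, mink (T s t) (T s t) = 1)
    (hB₁B₁ : ∀ s t : ℝ, mink (B₁ s t) (B₁ s t) = 1)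
    (hNN : ∀ s t : ℝ, mink (N s t) (N s t) = 0)
    (hB₂B₂ : ∀ s t : ℝ, mink (B₂ s t) (B₂ s t) = 0)
    (hNB₂ : ∀ s t : ℝ, mink (N s t) (B₂ s t) = 1)
    (hTN : ∀ s t : ℝ, mink (T s t) (N s t) = 0)
    (hTB₁ : ∀ s t : ℝ, mink (T s t) (B₁ s t) = 0)
    (hTB₂ : ∀ s t : ℝ, mink (T s t) (B₂ s t) = 0)
    (hNB₁ : ∀ s t : ℝ, mink (N s t) (B₁ s t) = 0)
    (hB₁B₂ : ∀ s t : ℝ, mink (B₁ s t) (B₂ s t) = 0)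
    -- arclength parametrization and pseudo null Frenet equations (k₁ = 1)
    (hk₁ : ∀ s t : ℝ, k₁ s t = 1)
    (hT : ∀ s t : ℝ, T s t = deriv (fun x => γ x t) s)
    (hunit : ∀ s t : ℝ, mnorm (deriv (fun x => γ x t) s) = 1)
    (hfr₁ : ∀ s t : ℝ, deriv (fun x => T x t) s = k₁ s t • N s t)
    (hfr₂ : ∀ s t : ℝ, deriv (fun x => N x t) s = k₂ s t • B₁ s t)
    (hfr₃ : ∀ s t : ℝ, deriv (fun x => B₁ x t) s = k₃ s t • N s t - k₂ s t • B₂ s t)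
    (hfr₄ : ∀ s t : ℝ, deriv (fun x => B₂ x t) s = -(k₁ s t) • T s t - k₃ s t • B₁ s t)
    (hflow : ∀ s t : ℝ, deriv (fun x => γ s x) t =
      α₁ s t • T s t + α₂ s t • N s t + α₃ s t • B₁ s t + α₄ s t • B₂ s t)
    -- inextensibility: ∂α₁/∂s = α₄
    (hinext : ∀ s t : ℝ, deriv (fun x => α₁ x t) s = α₄ s t)
    (hψ₁ : ∀ s t : ℝ, ψ₁ s t = mink (deriv (fun x => N s x) t) (B₁ s t))
    (hψ₂ : ∀ s t : ℝ, ψ₂ s t = mink (deriv (fun x => N s x) t) (B₂ s t))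
    (hψ₃ : ∀ s t : ℝ, ψ₃ s t = mink (deriv (fun x => B₁ s x) t) (B₂ s t)) :
    ∀ s t : ℝ, deriv (fun x => ψ₂ x t) s =
      deriv (fun x => α₄ x t) s - α₃ s t * k₂ s t - ψ₁ s t * k₃ s t + ψ₃ s t * k₂ s t :=
  psi2_equation_pseudo_null_general γ T N B₁ B₂ k₁ k₂ k₃ α₁ α₂ α₃ α₄ ψ₁ ψ₂ ψ₃ hγsmooth hTsmooth
    hNsmooth hB₁smooth hB₂smooth hk₂smooth hB₁B₁ hNN hNB₂ hTN hTB₁ hNB₁ hB₁B₂ hk₁ hT hfr₂ hfr₄ hflow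
    hψ₁ hψ₂ hψ₃
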